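/- arXiv:1402.3210 — 7 statements merged into one kernel-verified Lean document; each statement's English description precedes it below -/
import Mathlib

section
/- Let S be an m×n real matrix with nonnegative entries, and let τ̄_w ∈ ℝ^m and τ₀ ∈ ℝ^n have strictly positive entries. Define the maps Φ_s : ℝ^n_{≥0} → ℝ^m by Φ_s(τ_x)_i = 1/((S τ_x)_i + 1/τ̄_{w,i}) and Φ_x : ℝ^m_{≥0} → ℝ^n by Φ_x(τ_s)_j = 1/((Sᵀ τ_s)_j + 1/τ₀_j), and set Φ := Φ_x ∘ Φ_s. Then Φ has a unique fixed point τ_x* with strictly positive entries, and for every initialization τ_x^0 with strictly positive entries the iterates τ_x^{t+1} = Φ(τ_x^t) converge to τ_x* as t → ∞; likewise the iterates τ_s^t = Φ_s(τ_x^t) converge to the unique strictly positive fixed point of Φ_s ∘ Φ_x. (This establishes that the GAMP stepsizes in the Gaussian case converge to unique fixed points, independent of the damping constants.) -/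
/-!
`Φ = Φ_x ∘ Φ_s` is a standard interference function in the sense of Yates: it is monotone on the
nonnegative orthant (a composition of two antitone maps) and strictly scalable,
`Φ (α • τ) < α • Φ τ` for `α > 1`. Scalability leaves room for at most one positive fixed point.
Since `Φ` is continuous and bounded by `τ₀`, the increasing orbit of `0` and the decreasing orbit of
`τ₀` converge to fixed points, hence to the same one, and squeeze every other orbit. The claims
for `Φ_s ∘ Φ_x` follow because `Φ_s` maps fixed points of `Φ_x ∘ Φ_s` to fixed points of
`Φ_s ∘ Φ_x`, and `Φ_x` maps them back.
-/

open Matrix Filter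

/-- The GAMP stepsize half-update `Φ_s`. -/
noncomputable def PhiS {m n : ℕ} (S : Matrix (Fin m) (Fin n) ℝ)
    (w : Fin m → ℝ) (τx : Fin n → ℝ) : Fin m → ℝ :=
  fun i => 1 / ((S.mulVec τx) i + 1 / w i)

/-- The GAMP stepsize half-update `Φ_x`. -/
noncomputable def PhiX {m n : ℕ} (S : Matrix (Fin m) (Fin n) ℝ)
    (τ0 : Fin n → ℝ) (τs : Fin m → ℝ) : Fin n → ℝ :=
  fun j => 1 / ((Sᵀ.mulVec τs) j + 1 / τ0 j)

open Set Function Topology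

namespace Matrix

variable {R l n : Type*} [Semiring R] [PartialOrder R] [IsOrderedRing R] [Fintype n]
  {A : Matrix l n R} {u v : n → R}

theorem mulVec_nonneg_of_nonneg (hA : ∀ i j, 0 ≤ A i j) (hv : 0 ≤ v) : 0 ≤ A *ᵥ v :=
  fun i => dotProduct_nonneg_of_nonneg (fun j => hA i j) hv

theorem mulVec_le_mulVec_of_nonneg (hA : ∀ i j, 0 ≤ A i j) (huv : u ≤ v) : A *ᵥ u ≤ A *ᵥ v :=
  fun i => dotProduct_le_dotProduct_of_nonneg_left huv fun j => hA i j

end Matrix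

/-- Yates' standard interference functions, on the nonnegative orthant. Positivity, usually the
third axiom, follows from scalability at `0`. -/
structure IsStandardInterference {ι : Type*} (F : (ι → ℝ) → ι → ℝ) : Prop where
  monotoneOn : MonotoneOn F (Ici 0)
  scalable : ∀ ⦃α : ℝ⦄, 1 < α → ∀ ⦃τ : ι → ℝ⦄, 0 ≤ τ → ∀ i, F (α • τ) i < α * F τ i

namespace IsStandardInterference

variable {ι : Type*} {F : (ι → ℝ) → ι → ℝ} {σ τ p q : ι → ℝ}

theorem pos (hF : IsStandardInterference F) (hτ : 0 ≤ τ) (i : ι) : 0 < F τ i := by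
  have h0 := hF.scalable one_lt_two le_rfl i
  rw [smul_zero] at h0
  exact (by linarith : 0 < F 0 i).trans_le (hF.monotoneOn self_mem_Ici hτ hτ i)

theorem mapsTo (hF : IsStandardInterference F) : MapsTo F (Ici 0) (Ici 0) :=
  fun _ hτ i => (hF.pos hτ i).le

theorem iterate_mono (hF : IsStandardInterference F) (hσ : 0 ≤ σ) (hστ : σ ≤ τ) (t : ℕ) :
    F^[t] σ ≤ F^[t] τ := by
  induction t with
  | zero => exact hστ
  | succ t ih =>
    simp only [iterate_succ_apply']
    exact hF.monotoneOn (hF.mapsTo.iterate t hσ) (hF.mapsTo.iterate t (hσ.trans hστ)) ih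

theorem monotone_iterate_of_le_map (hF : IsStandardInterference F) (hτ : 0 ≤ τ)
    (hτF : τ ≤ F τ) : Monotone fun t => F^[t] τ :=
  monotone_nat_of_le_succ fun t => by
    rw [iterate_succ_apply]
    exact hF.iterate_mono hτ hτF t

theorem antitone_iterate_of_map_le (hF : IsStandardInterference F) (hτ : 0 ≤ τ)
    (hFτ : F τ ≤ τ) : Antitone fun t => F^[t] τ :=
  antitone_nat_of_succ_le fun t => by
    rw [iterate_succ_apply]
    exact hF.iterate_mono (hF.mapsTo hτ) hFτ t

/-- If `q ≰ p`, the largest ratio `α = q k / p k` exceeds `1`, and `q ≤ α • p` gives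
`q k = F q k ≤ F (α • p) k < α * p k = q k`. -/
theorem le_of_isFixedPt [Finite ι] (hF : IsStandardInterference F) (hp : 0 ≤ p) (hq : 0 ≤ q)
    (hpF : IsFixedPt F p) (hqF : IsFixedPt F q) : q ≤ p := by
  have := Fintype.ofFinite ι
  intro j
  by_contra! hj
  have hp_pos : ∀ i, 0 < p i := fun i => hpF ▸ hF.pos hp i
  obtain ⟨k, -, hk⟩ := Finset.exists_max_image Finset.univ (fun i => q i / p i)
    ⟨j, Finset.mem_univ j⟩
  set α := q k / p k
  have hα : 1 < α := ((one_lt_div (hp_pos j)).2 hj).trans_le (hk j (Finset.mem_univ j))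
  have hqα : q ≤ α • p := fun i => (div_le_iff₀ (hp_pos i)).1 (hk i (Finset.mem_univ i))
  have hαp : α * p k = q k := div_mul_cancel₀ _ (hp_pos k).ne'
  have := calc
    q k = F q k := (congrFun hqF k).symm
    _ ≤ F (α • p) k := hF.monotoneOn hq (smul_nonneg (by linarith) hp) hqα k
    _ < α * F p k := hF.scalable hα hp k
    _ = q k := by rw [hpF, hαp]
  exact lt_irrefl _ this

theorem eq_of_isFixedPt [Finite ι] (hF : IsStandardInterference F) (hp : 0 ≤ p) (hq : 0 ≤ q)
    (hpF : IsFixedPt F p) (hqF : IsFixedPt F q) : p = q :=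
  le_antisymm (hF.le_of_isFixedPt hq hp hqF hpF) (hF.le_of_isFixedPt hp hq hpF hqF)

theorem exists_isFixedPt_tendsto_iterate [Finite ι] (hF : IsStandardInterference F)
    (hcont : ∀ τ, 0 ≤ τ → ContinuousAt F τ) {U : ι → ℝ} (hU : ∀ τ, 0 ≤ τ → F τ ≤ U) :
    ∃ p, 0 ≤ p ∧ IsFixedPt F p ∧ ∀ τ, 0 ≤ τ → Tendsto (fun t => F^[t] τ) atTop (𝓝 p) := by
  have hU0 : 0 ≤ U := hF.mapsTo self_mem_Ici |>.trans (hU 0 le_rfl)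
  have hlow := hF.monotone_iterate_of_le_map le_rfl (hF.mapsTo self_mem_Ici)
  have hup := hF.antitone_iterate_of_map_le hU0 (hU U hU0)
  have hlow_le_up : ∀ t, F^[t] 0 ≤ F^[t] U := hF.iterate_mono le_rfl hU0
  have hp := tendsto_atTop_ciSup hlow ⟨U, forall_mem_range.2 fun t =>
    (hlow_le_up t).trans (hup (Nat.zero_le t))⟩
  have hq := tendsto_atTop_ciInf hup ⟨0, forall_mem_range.2 fun t => hF.mapsTo.iterate t hU0⟩
  set p := ⨆ t, F^[t] (0 : ι → ℝ)
  have hp0 : 0 ≤ p := hlow.ge_of_tendsto hp 0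
  have hpF : IsFixedPt F p := isFixedPt_of_tendsto_iterate hp (hcont p hp0)
  have hq0 : 0 ≤ ⨅ t, F^[t] U := ge_of_tendsto' hq fun t => hF.mapsTo.iterate t hU0
  rw [← hF.eq_of_isFixedPt hp0 hq0 hpF (isFixedPt_of_tendsto_iterate hq (hcont _ hq0))] at hq
  refine ⟨p, hp0, hpF, fun τ hτ => (tendsto_add_atTop_iff_nat 1).1 ?_⟩
  refine tendsto_pi_nhds.2 fun i => tendsto_of_tendsto_of_tendsto_of_le_of_le
    (tendsto_pi_nhds.1 hp i) (tendsto_pi_nhds.1 hq i) (fun t => ?_) (fun t => ?_)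
  · exact hF.iterate_mono le_rfl (hF.mapsTo hτ) t i
  · exact hF.iterate_mono (hF.mapsTo hτ) (hU τ hτ) t i

end IsStandardInterference

section GaussianStepsizes

variable {m n : ℕ} {S : Matrix (Fin m) (Fin n) ℝ} {w : Fin m → ℝ} {τ : Fin n → ℝ}

theorem phiS_denom_pos (hS : ∀ i j, 0 ≤ S i j) (hw : ∀ i, 0 < w i) (hτ : 0 ≤ τ) (i : Fin m) :
    0 < (S *ᵥ τ) i + 1 / w i :=
  add_pos_of_nonneg_of_pos (mulVec_nonneg_of_nonneg hS hτ i) (one_div_pos.2 (hw i))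

theorem phiS_pos (hS : ∀ i j, 0 ≤ S i j) (hw : ∀ i, 0 < w i) (hτ : 0 ≤ τ) (i : Fin m) :
    0 < PhiS S w τ i :=
  one_div_pos.2 (phiS_denom_pos hS hw hτ i)

theorem phiS_le (hS : ∀ i j, 0 ≤ S i j) (hw : ∀ i, 0 < w i) (hτ : 0 ≤ τ) : PhiS S w τ ≤ w :=
  fun i => (one_div_le_one_div_of_le (one_div_pos.2 (hw i))
    (le_add_of_nonneg_left (mulVec_nonneg_of_nonneg hS hτ i))).trans_eq (one_div_one_div _)

theorem antitoneOn_phiS (hS : ∀ i j, 0 ≤ S i j) (hw : ∀ i, 0 < w i) :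
    AntitoneOn (PhiS S w) (Ici 0) :=
  fun _ hσ _ _ hστ i => one_div_le_one_div_of_le (phiS_denom_pos hS hw hσ i)
    (add_le_add_left (mulVec_le_mulVec_of_nonneg hS hστ i) _)

theorem phiS_lt_mul_phiS_smul (hS : ∀ i j, 0 ≤ S i j) (hw : ∀ i, 0 < w i) {α : ℝ} (hα : 1 < α)
    (hτ : 0 ≤ τ) (i : Fin m) : PhiS S w τ i < α * PhiS S w (α • τ) i := by
  have hSτ := mulVec_nonneg_of_nonneg hS hτ i
  have hw' := one_div_pos.2 (hw i)
  simp only [PhiS, mulVec_smul, Pi.smul_apply, smul_eq_mul, mul_one_div]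
  rw [div_lt_div_iff₀ (add_pos_of_nonneg_of_pos hSτ hw')
    (add_pos_of_nonneg_of_pos (mul_nonneg (by linarith) hSτ) hw')]
  nlinarith

theorem continuousAt_phiS (hS : ∀ i j, 0 ≤ S i j) (hw : ∀ i, 0 < w i) (hτ : 0 ≤ τ) :
    ContinuousAt (PhiS S w) τ :=
  continuousAt_pi.2 fun i => continuousAt_const.div
    ((continuous_apply i).comp (continuous_const.matrix_mulVec continuous_id) |>.add
      continuous_const).continuousAt (phiS_denom_pos hS hw hτ i).ne'

/-- `PhiX S τ0` is definitionally `PhiS Sᵀ τ0`, so the lemmas on `PhiS` serve for both maps.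
Scalability comes from `Φ_s (α • τ) ≥ α⁻¹ • Φ_s τ` followed by the strict inequality for `Φ_x`
at `α⁻¹ • Φ_s τ`. -/
theorem isStandardInterference_phiX_comp_phiS (hS : ∀ i j, 0 ≤ S i j) (hw : ∀ i, 0 < w i)
    {τ0 : Fin n → ℝ} (hτ0 : ∀ j, 0 < τ0 j) : IsStandardInterference (PhiX S τ0 ∘ PhiS S w) where
  monotoneOn _ hσ _ hτ hστ :=
    antitoneOn_phiS (fun j i => hS i j) hτ0 (fun i => (phiS_pos hS hw hτ i).le)
      (fun i => (phiS_pos hS hw hσ i).le) (antitoneOn_phiS hS hw hσ hτ hστ)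
  scalable α hα τ hτ j := by
    have hα0 : 0 < α := one_pos.trans hα
    have hs : 0 ≤ PhiS S w τ := fun i => (phiS_pos hS hw hτ i).le
    have hs' : 0 ≤ α⁻¹ • PhiS S w τ := smul_nonneg (inv_nonneg.2 hα0.le) hs
    have hlower : α⁻¹ • PhiS S w τ ≤ PhiS S w (α • τ) := fun i =>
      (inv_mul_le_iff₀ hα0).2 (phiS_lt_mul_phiS_smul hS hw hα hτ i).le
    calc PhiX S τ0 (PhiS S w (α • τ)) j
        ≤ PhiX S τ0 (α⁻¹ • PhiS S w τ) j :=
          antitoneOn_phiS (fun j i => hS i j) hτ0 hs'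
            (fun i => (phiS_pos hS hw (smul_nonneg hα0.le hτ) i).le) hlower j
      _ < α * PhiX S τ0 (α • α⁻¹ • PhiS S w τ) j :=
          phiS_lt_mul_phiS_smul (fun j i => hS i j) hτ0 hα hs' j
      _ = α * PhiX S τ0 (PhiS S w τ) j := by rw [smul_inv_smul₀ hα0.ne']

end GaussianStepsizes

/-- **Theorem 1 (convergence of GGAMP stepsizes).**
For any entrywise nonnegative `S` and strictly positive `τ̄_w`, `τ₀`, the composed
stepsize update `Φ = Φ_x ∘ Φ_s` has a unique strictly positive fixed point `τ_x*`,
and the iterates from any strictly positive initialization converge to it;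
likewise `τ_s^t = Φ_s(τ_x^t)` converges to the unique strictly positive fixed
point of `Φ_s ∘ Φ_x`. -/
theorem ggamp_stepsize_convergence {m n : ℕ}
    (S : Matrix (Fin m) (Fin n) ℝ) (hS : ∀ i j, 0 ≤ S i j)
    (w : Fin m → ℝ) (hw : ∀ i, 0 < w i)
    (τ0 : Fin n → ℝ) (hτ0 : ∀ j, 0 < τ0 j) :
    ∃ τxstar : Fin n → ℝ,
      (∀ j, 0 < τxstar j) ∧
      (PhiX S τ0 ∘ PhiS S w) τxstar = τxstar ∧
      (∀ τ : Fin n → ℝ, (∀ j, 0 < τ j) → (PhiX S τ0 ∘ PhiS S w) τ = τ → τ = τxstar) ∧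
      (∀ τinit : Fin n → ℝ, (∀ j, 0 < τinit j) →
        Tendsto (fun t : ℕ => (PhiX S τ0 ∘ PhiS S w)^[t] τinit) atTop (nhds τxstar)) ∧
      ∃ τsstar : Fin m → ℝ,
        (∀ i, 0 < τsstar i) ∧
        (PhiS S w ∘ PhiX S τ0) τsstar = τsstar ∧
        (∀ τ : Fin m → ℝ, (∀ i, 0 < τ i) → (PhiS S w ∘ PhiX S τ0) τ = τ → τ = τsstar) ∧
        (∀ τinit : Fin n → ℝ, (∀ j, 0 < τinit j) →
          Tendsto (fun t : ℕ => PhiS S w ((PhiX S τ0 ∘ PhiS S w)^[t] τinit))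
            atTop (nhds τsstar)) := by
  have hST : ∀ j i, 0 ≤ Sᵀ j i := fun j i => hS i j
  have hs : ∀ τ : Fin n → ℝ, 0 ≤ τ → 0 ≤ PhiS S w τ := fun τ hτ i => (phiS_pos hS hw hτ i).le
  have hΦ := isStandardInterference_phiX_comp_phiS hS hw hτ0
  obtain ⟨p, hp0, hpΦ, hconv⟩ := hΦ.exists_isFixedPt_tendsto_iterate
    (fun τ hτ => (continuousAt_phiS hST hτ0 (hs τ hτ)).comp (continuousAt_phiS hS hw hτ))
    (fun τ hτ => phiS_le hST hτ0 (hs τ hτ))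
  have huniq : ∀ τ, (∀ j, 0 < τ j) → (PhiX S τ0 ∘ PhiS S w) τ = τ → τ = p :=
    fun τ hτ hτΦ => hΦ.eq_of_isFixedPt (fun j => (hτ j).le) hp0 hτΦ hpΦ
  refine ⟨p, fun j => hpΦ ▸ hΦ.pos hp0 j, hpΦ, huniq, fun τ hτ => hconv τ fun j => (hτ j).le,
    PhiS S w p, phiS_pos hS hw hp0, hpΦ.map fun _ => rfl, fun q hq hqΦ => ?_,
    fun τ hτ => (continuousAt_phiS hS hw hp0).tendsto.comp (hconv τ fun j => (hτ j).le)⟩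
  have hxq : PhiX S τ0 q = p :=
    huniq _ (phiS_pos hST hτ0 fun i => (hq i).le) (IsFixedPt.map hqΦ fun _ => rfl)
  exact hxq ▸ hqΦ.symm
end

section
/- Let S be an m×n real matrix with nonnegative entries, and let τ̄_w ∈ ℝ^m and τ₀ ∈ ℝ^n have strictly positive entries. Define Φ_s(τ_x)_i = 1/((S τ_x)_i + 1/τ̄_{w,i}), Φ_x(τ_s)_j = 1/((Sᵀ τ_s)_j + 1/τ₀_j), and Φ := Φ_x ∘ Φ_s. Then: (i) Φ(τ) has strictly positive entries for every entrywise nonnegative τ; (ii) Φ is monotone: if τ ≥ τ' entrywise (both nonnegative) then Φ(τ) ≥ Φ(τ') entrywise; (iii) Φ is strictly scalable: for every α > 1 and entrywise nonnegative τ, Φ(ατ) < αΦ(τ) entrywise; (iv) Φ(τ) ≤ τ₀ entrywise for all nonnegative τ, and consequently every τ with τ ≥ τ₀ entrywise satisfies Φ(τ) ≤ τ entrywise. -/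
/-!
Both half-updates have the form `τ ↦ 1 / (A τ + c)` with `A ≥ 0` entrywise and `c > 0`, so each
is positive, bounded by `1 / c`, and antitone; the composite of two antitone maps is monotone.
For scalability, `A u + c < α (A v + c)` whenever `u ≤ α v` and `α > 1`, which gives
`Φ_s(τ) < α Φ_s(ατ)` and then, feeding this back in, `Φ_x(Φ_s(ατ)) < α Φ_x(Φ_s(τ))`.
-/

open Matrix

section MulVecOrder

variable {R ι κ : Type*} [Semiring R] [PartialOrder R] [IsOrderedRing R] [Fintype κ]
  {A : Matrix ι κ R}

lemma Matrix.mulVec_apply_nonneg (hA : ∀ i j, 0 ≤ A i j) {v : κ → R} (hv : 0 ≤ v) (i : ι) :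
    0 ≤ (A *ᵥ v) i :=
  dotProduct_nonneg_of_nonneg (hA i) hv

lemma Matrix.mulVec_apply_mono (hA : ∀ i j, 0 ≤ A i j) {u v : κ → R} (huv : u ≤ v) (i : ι) :
    (A *ᵥ u) i ≤ (A *ᵥ v) i :=
  dotProduct_le_dotProduct_of_nonneg_left huv (hA i)

end MulVecOrder

lemma PhiX_eq_PhiS_transpose {m n : ℕ} (S : Matrix (Fin m) (Fin n) ℝ) (τ0 : Fin n → ℝ) :
    PhiX S τ0 = PhiS Sᵀ τ0 :=
  rfl

section PhiS

variable {m n : ℕ} {A : Matrix (Fin m) (Fin n) ℝ} {w : Fin m → ℝ}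

lemma PhiS_denom_pos (hA : ∀ i j, 0 ≤ A i j) (hw : ∀ i, 0 < w i) {τ : Fin n → ℝ} (hτ : 0 ≤ τ)
    (i : Fin m) : 0 < (A *ᵥ τ) i + 1 / w i :=
  add_pos_of_nonneg_of_pos (mulVec_apply_nonneg hA hτ i) (one_div_pos.mpr (hw i))

lemma PhiS_pos (hA : ∀ i j, 0 ≤ A i j) (hw : ∀ i, 0 < w i) {τ : Fin n → ℝ} (hτ : 0 ≤ τ)
    (i : Fin m) : 0 < PhiS A w τ i :=
  one_div_pos.mpr (PhiS_denom_pos hA hw hτ i)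

lemma PhiS_le (hA : ∀ i j, 0 ≤ A i j) (hw : ∀ i, 0 < w i) {τ : Fin n → ℝ} (hτ : 0 ≤ τ)
    (i : Fin m) : PhiS A w τ i ≤ w i := by
  calc PhiS A w τ i ≤ 1 / (1 / w i) :=
        one_div_le_one_div_of_le (one_div_pos.mpr (hw i))
          (le_add_of_nonneg_left (mulVec_apply_nonneg hA hτ i))
    _ = w i := one_div_one_div (w i)

lemma PhiS_antitone (hA : ∀ i j, 0 ≤ A i j) (hw : ∀ i, 0 < w i) {u v : Fin n → ℝ}
    (hu : 0 ≤ u) (huv : u ≤ v) (i : Fin m) : PhiS A w v i ≤ PhiS A w u i :=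
  one_div_le_one_div_of_le (PhiS_denom_pos hA hw hu i)
    (add_le_add_left (mulVec_apply_mono hA huv i) _)

lemma PhiS_lt_mul_PhiS_of_le_smul (hA : ∀ i j, 0 ≤ A i j) (hw : ∀ i, 0 < w i) {α : ℝ}
    (hα : 1 < α) {u v : Fin n → ℝ} (hu : 0 ≤ u) (huv : u ≤ α • v) (i : Fin m) :
    PhiS A w v i < α * PhiS A w u i := by
  have hα0 : 0 < α := one_pos.trans hα
  have hv : 0 ≤ v := (smul_nonneg_iff_nonneg_of_pos_left hα0).mp (hu.trans huv)
  have hAuv : (A *ᵥ u) i ≤ α * (A *ᵥ v) i := by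
    simpa only [mulVec_smul, Pi.smul_apply, smul_eq_mul] using mulVec_apply_mono hA huv i
  have hc : 1 / w i < α * (1 / w i) := lt_mul_of_one_lt_left (one_div_pos.mpr (hw i)) hα
  rw [PhiS, PhiS, mul_one_div, div_lt_div_iff₀ (PhiS_denom_pos hA hw hv i)
    (PhiS_denom_pos hA hw hu i)]
  linarith

end PhiS

/-- The standard-interference-function properties (positivity, monotonicity,
strict scalability, and boundedness by `τ₀`) of the composed GAMP stepsize
update `Φ = Φ_x ∘ Φ_s` in the Gaussian case. -/
theorem ggamp_stepsize_map_properties {m n : ℕ}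
    (S : Matrix (Fin m) (Fin n) ℝ) (hS : ∀ i j, 0 ≤ S i j)
    (w : Fin m → ℝ) (hw : ∀ i, 0 < w i)
    (τ0 : Fin n → ℝ) (hτ0 : ∀ j, 0 < τ0 j) :
    -- (i) positivity
    (∀ τ : Fin n → ℝ, (∀ j, 0 ≤ τ j) → ∀ j, 0 < (PhiX S τ0 ∘ PhiS S w) τ j) ∧
    -- (ii) monotonicity
    (∀ τ τ' : Fin n → ℝ, (∀ j, 0 ≤ τ' j) → (∀ j, τ' j ≤ τ j) →
      ∀ j, (PhiX S τ0 ∘ PhiS S w) τ' j ≤ (PhiX S τ0 ∘ PhiS S w) τ j) ∧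
    -- (iii) strict scalability
    (∀ α : ℝ, 1 < α → ∀ τ : Fin n → ℝ, (∀ j, 0 ≤ τ j) →
      ∀ j, (PhiX S τ0 ∘ PhiS S w) (α • τ) j < α * (PhiX S τ0 ∘ PhiS S w) τ j) ∧
    -- (iv) boundedness by τ₀, and Φ(τ) ≤ τ whenever τ ≥ τ₀
    (∀ τ : Fin n → ℝ, (∀ j, 0 ≤ τ j) → ∀ j, (PhiX S τ0 ∘ PhiS S w) τ j ≤ τ0 j) ∧
    (∀ τ : Fin n → ℝ, (∀ j, 0 ≤ τ j) → (∀ j, τ0 j ≤ τ j) →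
      ∀ j, (PhiX S τ0 ∘ PhiS S w) τ j ≤ τ j) := by
  rw [PhiX_eq_PhiS_transpose]
  have hST : ∀ i j, 0 ≤ Sᵀ i j := fun i j => hS j i
  have hPhiS_nonneg : ∀ τ : Fin n → ℝ, 0 ≤ τ → 0 ≤ PhiS S w τ :=
    fun τ hτ i => (PhiS_pos hS hw hτ i).le
  have hbound : ∀ τ : Fin n → ℝ, 0 ≤ τ → ∀ j, (PhiX S τ0 ∘ PhiS S w) τ j ≤ τ0 j :=
    fun τ hτ => PhiS_le hST hτ0 (hPhiS_nonneg τ hτ)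
  refine ⟨fun τ hτ => PhiS_pos hST hτ0 (hPhiS_nonneg τ hτ), ?_, ?_, hbound,
    fun τ hτ hτ0τ j => (hbound τ hτ j).trans (hτ0τ j)⟩
  · intro τ τ' hτ' hτ'τ
    exact PhiS_antitone hST hτ0 (hPhiS_nonneg τ fun j => (hτ' j).trans (hτ'τ j))
      (PhiS_antitone hS hw hτ' hτ'τ)
  · intro α hα τ hτ
    have hατ : 0 ≤ α • τ := smul_nonneg (one_pos.trans hα).le hτ
    have hPhiS_scaled : PhiS S w τ ≤ α • PhiS S w (α • τ) :=
      fun i => (PhiS_lt_mul_PhiS_of_le_smul hS hw hα hατ le_rfl i).le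
    exact PhiS_lt_mul_PhiS_of_le_smul hST hτ0 hα (hPhiS_nonneg τ hτ) hPhiS_scaled
end

section
/- Let A be a nonzero real m×n matrix and θ_s, θ_x ∈ (0,1]. Suppose Γ(θ_s,θ_x) > ‖A‖₂²/‖A‖_F². Then for every prior variance τ₀ > 0 and noise variance v_w > 0, if (τ_s, τ_x) are scalar GGAMP fixed-point stepsizes for (A, τ₀, v_w), then every complex eigenvalue of the GGAMP iteration matrix H has modulus strictly less than 1 (i.e., damped scalar-stepsize Gaussian GAMP converges for any τ₀ and v_w). -/
/-!
Write an eigenvector of `H` as `(u, w)`. The first block row gives `F w = (μ - d_s) u`, and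
eliminating `u` from the second gives `μ FᵀF w = (d_x - μ)(μ - d_s) w`. So either `w = 0` and
`μ = d_s`, or, pairing with `w̄`, `μ` is a root of `z² - (d_s + d_x - r) z + d_s d_x` where the
Rayleigh quotient `r = ‖F w‖² / ‖w‖²` lies in `[0, θ_s θ_x τ_s τ_x ‖A‖₂²]`. The fixed-point
equations give `q_s, q_x ∈ [0, 1)`, hence `|d_s|, |d_x| < 1`, and by the Schur–Cohn test such a
root lies in the open unit disc as soon as `r < (1 + d_s)(1 + d_x)`. The hypothesis on `Γ` bounds
`θ_s θ_x τ_s τ_x ‖A‖₂²` by `2((2 - θ_s) q_x + θ_s q_s)` (for `m ≥ n`), and this is at most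
`(1 + d_s)(1 + d_x)`: the difference is `(1 - θ_x)(1 - q_x)(1 + d_s) + (1 - q_x)(2 - θ_s - θ_s q_s)`.
-/

open Matrix

/-- Squared Frobenius norm of a real matrix. -/
noncomputable def frobSq {m n : ℕ} (A : Matrix (Fin m) (Fin n) ℝ) : ℝ :=
  ∑ i, ∑ j, (A i j) ^ 2

/-- Squared spectral (ℓ²-operator) norm of a real matrix. -/
noncomputable def specSq {m n : ℕ} (A : Matrix (Fin m) (Fin n) ℝ) : ℝ :=
  ‖LinearMap.toContinuousLinearMap (Matrix.toEuclideanLin A)‖ ^ 2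

/-- The damping threshold `Γ(θ_s, θ_x)` of Theorem 2. -/
noncomputable def Gam (m n : ℕ) (θs θx : ℝ) : ℝ :=
  if n ≤ m then 2 * ((2 - θs) * m + θs * n) / (θs * θx * m * n)
  else 2 * ((2 - θx) * n + θx * m) / (θs * θx * m * n)

/-- `(τs, τx)` are scalar GGAMP fixed-point stepsizes for `(A, τ0, vw)`. -/
noncomputable def IsFixedStepsizes {m n : ℕ} (A : Matrix (Fin m) (Fin n) ℝ)
    (τ0 vw τs τx : ℝ) : Prop :=
  0 < τs ∧ 0 < τx ∧
    1 / τs = (frobSq A / m) * τx + vw ∧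
    1 / τx = (frobSq A / n) * τs + 1 / τ0

/-- The `(m+n)×(m+n)` GGAMP iteration matrix `H`. -/
noncomputable def iterMat {m n : ℕ} (A : Matrix (Fin m) (Fin n) ℝ)
    (θs θx τs τx : ℝ) : Matrix (Fin m ⊕ Fin n) (Fin m ⊕ Fin n) ℝ :=
  let qs : ℝ := τs * (frobSq A / m) * τx
  let qx : ℝ := τx * (frobSq A / n) * τs
  let ds : ℝ := (1 - θs) + θs * qs
  let dx : ℝ := (1 - θx) + θx * qx
  let F : Matrix (Fin m) (Fin n) ℝ := Real.sqrt (θs * θx * τs * τx) • A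
  Matrix.fromBlocks (ds • (1 : Matrix (Fin m) (Fin m) ℝ)) F
    (-(ds • Fᵀ)) (dx • (1 : Matrix (Fin n) (Fin n) ℝ) - Fᵀ * F)

/-- `μ ∈ ℂ` is an eigenvalue of the real matrix `M`. -/
def HasEig {N : Type*} [Fintype N] (M : Matrix N N ℝ) (μ : ℂ) : Prop :=
  ∃ v : N → ℂ, v ≠ 0 ∧ (M.map (fun x => (x : ℂ))).mulVec v = μ • v

open scoped Matrix.Norms.L2Operator

theorem norm_lt_one_of_sq_sub_mul_add_eq_zero {b c : ℝ} (hc : c < 1) (hb : |b| < 1 + c)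
    {μ : ℂ} (hμ : μ ^ 2 - b * μ + c = 0) : ‖μ‖ < 1 := by
  have hre : μ.re ^ 2 - μ.im ^ 2 - b * μ.re + c = 0 := by
    simpa [sq] using congrArg Complex.re hμ
  have him : μ.im * (2 * μ.re - b) = 0 := by
    have := congrArg Complex.im hμ
    simp [sq] at this
    linear_combination this
  obtain ⟨hb₁, hb₂⟩ := abs_lt.1 hb
  rw [← sq_lt_one_iff₀ (norm_nonneg μ), Complex.sq_norm, Complex.normSq_apply]
  rcases mul_eq_zero.1 him with hy | hx
  · rw [hy] at hre ⊢
    -- for `x = μ.re`: `x² - bx + c = (x-1)(x-c) + (1+c-b)x = (x+1)(x+c) - (1+c+b)x`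
    have hx₁ : μ.re < 1 := by
      by_contra! h
      nlinarith [mul_nonneg (sub_nonneg.2 h) (by linarith : (0:ℝ) ≤ μ.re - c)]
    have hx₂ : -1 < μ.re := by
      by_contra! h
      nlinarith [mul_nonneg (by linarith : (0:ℝ) ≤ -(μ.re + 1)) (by linarith : (0:ℝ) ≤ -(μ.re + c))]
    nlinarith
  · nlinarith

theorem norm_lt_one_of_mul_eq_sub_mul_sub {d e r : ℝ} (hd : |d| < 1) (he : |e| < 1)
    (hr₀ : 0 ≤ r) (hr : r < (1 + d) * (1 + e)) {μ : ℂ} (hμ : μ * r = (e - μ) * (μ - d)) :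
    ‖μ‖ < 1 := by
  obtain ⟨hd₁, hd₂⟩ := abs_lt.1 hd
  obtain ⟨he₁, he₂⟩ := abs_lt.1 he
  refine norm_lt_one_of_sq_sub_mul_add_eq_zero (b := d + e - r) (c := d * e) ?_ ?_ ?_
  · nlinarith
  · rw [abs_lt]
    constructor <;> nlinarith
  · push_cast
    linear_combination hμ

section BlockEigen

variable {R : Type*} [CommRing R] {m n : Type*} [Fintype m] [Fintype n] [DecidableEq m]
  [DecidableEq n]

theorem eigen_equations_of_fromBlocks_mulVec_eq_smul {d e μ : R} {F : Matrix m n R}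
    {G : Matrix n m R} {u : m → R} {w : n → R}
    (h : fromBlocks (d • 1) F (-(d • G)) (e • 1 - G * F) *ᵥ Sum.elim u w = μ • Sum.elim u w) :
    F *ᵥ w = (μ - d) • u ∧ μ • (G *ᵥ F *ᵥ w) = ((e - μ) * (μ - d)) • w := by
  rw [fromBlocks_mulVec] at h
  have h₁ := fun i => congrFun h (Sum.inl i)
  have h₂ := fun j => congrFun h (Sum.inr j)
  simp only [Sum.elim_comp_inl, Sum.elim_comp_inr, Sum.elim_inl, Sum.elim_inr, smul_mulVec,
    one_mulVec, neg_mulVec, sub_mulVec, ← mulVec_mulVec, Pi.add_apply, Pi.smul_apply,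
    Pi.neg_apply, Pi.sub_apply, smul_eq_mul] at h₁ h₂
  have hFw : F *ᵥ w = (μ - d) • u := funext fun i => by
    simp only [Pi.smul_apply, smul_eq_mul]; linear_combination h₁ i
  refine ⟨hFw, funext fun j => ?_⟩
  have hGFw := congrFun (congrArg (G *ᵥ ·) hFw) j
  simp only [mulVec_smul, Pi.smul_apply, smul_eq_mul] at hGFw ⊢
  linear_combination (d - μ) * h₂ j + d * hGFw

end BlockEigen

section Complexification

variable {m n : Type*} [Fintype n]

theorem EuclideanSpace.norm_sq_eq_re_add_im (z : n → ℂ) :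
    ‖WithLp.toLp 2 z‖ ^ 2 =
      ‖WithLp.toLp 2 (fun i => (z i).re)‖ ^ 2 + ‖WithLp.toLp 2 (fun i => (z i).im)‖ ^ 2 := by
  simp only [EuclideanSpace.norm_sq_eq, ← Finset.sum_add_distrib, Complex.sq_norm,
    Complex.normSq_apply, Real.norm_eq_abs, sq_abs]
  simp [sq]

theorem re_map_ofReal_mulVec (A : Matrix m n ℝ) (w : n → ℂ) (i : m) :
    ((A.map Complex.ofReal *ᵥ w) i).re = (A *ᵥ fun j => (w j).re) i := by
  simp [mulVec, dotProduct, Complex.re_sum]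

theorem im_map_ofReal_mulVec (A : Matrix m n ℝ) (w : n → ℂ) (i : m) :
    ((A.map Complex.ofReal *ᵥ w) i).im = (A *ᵥ fun j => (w j).im) i := by
  simp [mulVec, dotProduct, Complex.im_sum]

theorem norm_map_ofReal_mulVec_le [Fintype m] [DecidableEq n] (A : Matrix m n ℝ) (w : n → ℂ) :
    ‖WithLp.toLp 2 (A.map Complex.ofReal *ᵥ w)‖ ≤ ‖A‖ * ‖WithLp.toLp 2 w‖ := by
  have hre := A.l2_opNorm_mulVec (WithLp.toLp 2 fun j => (w j).re)
  have him := A.l2_opNorm_mulVec (WithLp.toLp 2 fun j => (w j).im)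
  refine le_of_sq_le_sq ?_ (by positivity)
  rw [mul_pow, EuclideanSpace.norm_sq_eq_re_add_im, EuclideanSpace.norm_sq_eq_re_add_im w,
    mul_add, ← mul_pow, ← mul_pow]
  simp only [re_map_ofReal_mulVec, im_map_ofReal_mulVec]
  gcongr
  exacts [hre, him]

end Complexification

theorem star_dotProduct_self_eq_norm_sq {𝕜 n : Type*} [RCLike 𝕜] [Fintype n] (x : n → 𝕜) :
    star x ⬝ᵥ x = (‖WithLp.toLp 2 x‖ : 𝕜) ^ 2 := by
  rw [dotProduct_comm, ← EuclideanSpace.inner_toLp_toLp, inner_self_eq_norm_sq_to_K]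

section RealBlockMatrix

variable {m n : Type*} [Fintype m] [DecidableEq m] [DecidableEq n]

theorem map_ofReal_fromBlocks (d e : ℝ) (F : Matrix m n ℝ) :
    (fromBlocks (d • 1) F (-(d • Fᵀ)) (e • 1 - Fᵀ * F)).map Complex.ofReal =
      fromBlocks ((d : ℂ) • 1) (F.map Complex.ofReal) (-((d : ℂ) • (F.map Complex.ofReal)ᴴ))
        ((e : ℂ) • 1 - (F.map Complex.ofReal)ᴴ * F.map Complex.ofReal) := by
  ext (i | i) (j | j) <;> simp [one_apply, mul_apply, apply_ite Complex.ofReal]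

theorem eq_or_exists_of_hasEig_fromBlocks [Fintype n] {d e : ℝ} {F : Matrix m n ℝ} {μ : ℂ}
    (h : HasEig (fromBlocks (d • 1) F (-(d • Fᵀ)) (e • 1 - Fᵀ * F)) μ) :
    μ = d ∨ ∃ r : ℝ, 0 ≤ r ∧ r ≤ ‖F‖ ^ 2 ∧ μ * r = (e - μ) * (μ - d) := by
  obtain ⟨v, hv, hμ⟩ := h
  set B := F.map Complex.ofReal
  rw [map_ofReal_fromBlocks, ← Sum.elim_comp_inl_inr v] at hμ
  obtain ⟨hFw, hGFw⟩ := eigen_equations_of_fromBlocks_mulVec_eq_smul hμ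
  set u := v ∘ Sum.inl
  set w := v ∘ Sum.inr
  by_cases hw : w = 0
  · left
    have hu : u ≠ 0 := fun hu => hv (by ext (i | j); exacts [congrFun hu i, congrFun hw j])
    rw [hw, mulVec_zero, eq_comm, smul_eq_zero] at hFw
    exact sub_eq_zero.1 (hFw.resolve_right hu)
  · right
    have hw₀ : 0 < ‖WithLp.toLp 2 w‖ := by simpa using hw
    refine ⟨‖WithLp.toLp 2 (B *ᵥ w)‖ ^ 2 / ‖WithLp.toLp 2 w‖ ^ 2, by positivity, ?_, ?_⟩
    · rw [div_le_iff₀ (by positivity), ← mul_pow]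
      gcongr
      exact norm_map_ofReal_mulVec_le F w
    · have hquad := congrArg (star w ⬝ᵥ ·) hGFw
      simp only [dotProduct_smul, smul_eq_mul] at hquad
      rw [dotProduct_mulVec, ← star_mulVec, star_dotProduct_self_eq_norm_sq,
        star_dotProduct_self_eq_norm_sq] at hquad
      have hW : (‖WithLp.toLp 2 w‖ : ℂ) ^ 2 ≠ 0 := by exact_mod_cast (pow_pos hw₀ 2).ne'
      push_cast
      rw [mul_div_assoc', div_eq_iff hW]
      linear_combination hquad

end RealBlockMatrix

theorem frobSq_nonneg {m n : ℕ} (A : Matrix (Fin m) (Fin n) ℝ) : 0 ≤ frobSq A := by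
  unfold frobSq
  positivity

theorem frobSq_eq_zero_iff {m n : ℕ} {A : Matrix (Fin m) (Fin n) ℝ} : frobSq A = 0 ↔ A = 0 := by
  simp [frobSq, Finset.sum_eq_zero_iff_of_nonneg, sq_nonneg, Finset.sum_nonneg, ← Matrix.ext_iff]

theorem specSq_eq_norm_sq {m n : ℕ} (A : Matrix (Fin m) (Fin n) ℝ) : specSq A = ‖A‖ ^ 2 := rfl

theorem abs_one_sub_add_mul_lt_one {θ q : ℝ} (hθ : θ ∈ Set.Ioc 0 1) (hq₀ : 0 ≤ q) (hq₁ : q < 1) :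
    |1 - θ + θ * q| < 1 := by
  obtain ⟨hθ₀, hθ₁⟩ := hθ
  rw [abs_lt]
  constructor <;> nlinarith

theorem two_mul_le_one_add_mul_one_add {θa θb qa qb : ℝ} (hθa₀ : 0 ≤ θa) (hθa₁ : θa ≤ 1)
    (hθb₁ : θb ≤ 1) (hqa₀ : 0 ≤ qa) (hqa₁ : qa ≤ 1) (hqb₁ : qb ≤ 1) :
    2 * ((2 - θa) * qb + θa * qa) ≤ (1 + (1 - θa + θa * qa)) * (1 + (1 - θb + θb * qb)) := by
  have h₁ : 0 ≤ (1 - θb) * (1 - qb) * (2 - θa + θa * qa) := by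
    have : 0 ≤ θa * qa := mul_nonneg hθa₀ hqa₀
    apply mul_nonneg <;> nlinarith
  have h₂ : 0 ≤ (1 - qb) * (2 - θa - θa * qa) := by
    apply mul_nonneg <;> nlinarith
  linear_combination h₁ + h₂

theorem mul_Gam_mul_eq {m n : ℕ} (hm : m ≠ 0) (hn : n ≠ 0) {θs θx : ℝ} (hθs : θs ≠ 0)
    (hθx : θx ≠ 0) (τs τx φ : ℝ) :
    θs * θx * τs * τx * (Gam m n θs θx * φ) =
      if n ≤ m then 2 * ((2 - θs) * (τx * (φ / n) * τs) + θs * (τs * (φ / m) * τx))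
      else 2 * ((2 - θx) * (τs * (φ / m) * τx) + θx * (τx * (φ / n) * τs)) := by
  unfold Gam
  split_ifs <;> field_simp

theorem IsFixedStepsizes.qs_lt_one {m n : ℕ} {A : Matrix (Fin m) (Fin n) ℝ} {τ0 vw τs τx : ℝ}
    (h : IsFixedStepsizes A τ0 vw τs τx) (hvw : 0 < vw) : τs * (frobSq A / m) * τx < 1 := by
  obtain ⟨hτs, -, hs, -⟩ := h
  have : τs * (frobSq A / m) * τx = 1 - τs * vw := by
    rw [mul_assoc, show frobSq A / m * τx = 1 / τs - vw by linarith]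
    field_simp
  nlinarith

theorem IsFixedStepsizes.qx_lt_one {m n : ℕ} {A : Matrix (Fin m) (Fin n) ℝ} {τ0 vw τs τx : ℝ}
    (h : IsFixedStepsizes A τ0 vw τs τx) (hτ0 : 0 < τ0) : τx * (frobSq A / n) * τs < 1 := by
  obtain ⟨-, hτx, -, hx⟩ := h
  have : τx * (frobSq A / n) * τs = 1 - τx / τ0 := by
    rw [mul_assoc, show frobSq A / n * τs = 1 / τx - 1 / τ0 by linarith]
    field_simp
  have : 0 < τx / τ0 := by positivity
  linarith

theorem mul_specSq_lt_of_lt_Gam {m n : ℕ} {A : Matrix (Fin m) (Fin n) ℝ} {θs θx τs τx : ℝ}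
    (hθs : θs ∈ Set.Ioc 0 1) (hθx : θx ∈ Set.Ioc 0 1) (hΓ : specSq A / frobSq A < Gam m n θs θx)
    (hτs : 0 < τs) (hτx : 0 < τx) (hqs : τs * (frobSq A / m) * τx < 1)
    (hqx : τx * (frobSq A / n) * τs < 1) :
    θs * θx * τs * τx * specSq A <
      (1 + (1 - θs + θs * (τs * (frobSq A / m) * τx))) *
        (1 + (1 - θx + θx * (τx * (frobSq A / n) * τs))) := by
  have hφ := frobSq_nonneg A
  have hqs₀ : 0 ≤ τs * (frobSq A / m) * τx := by positivity
  have hqx₀ : 0 ≤ τx * (frobSq A / n) * τs := by positivity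
  obtain ⟨hθs₀, hθs₁⟩ := hθs
  obtain ⟨hθx₀, hθx₁⟩ := hθx
  rcases hφ.eq_or_lt with hφ₀ | hφ₀
  · have hds := abs_lt.1 (abs_one_sub_add_mul_lt_one ⟨hθs₀, hθs₁⟩ hqs₀ hqs)
    have hdx := abs_lt.1 (abs_one_sub_add_mul_lt_one ⟨hθx₀, hθx₁⟩ hqx₀ hqx)
    have hA : specSq A = 0 := by
      rw [specSq_eq_norm_sq, frobSq_eq_zero_iff.1 hφ₀.symm, norm_zero, sq, zero_mul]
    rw [hA, mul_zero]
    exact mul_pos (by linarith) (by linarith)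
  · have hm : m ≠ 0 := by rintro rfl; simp [frobSq] at hφ₀
    have hn : n ≠ 0 := by rintro rfl; simp [frobSq] at hφ₀
    calc θs * θx * τs * τx * specSq A < θs * θx * τs * τx * (Gam m n θs θx * frobSq A) := by
          gcongr
          exact (div_lt_iff₀ hφ₀).1 hΓ
      _ ≤ _ := by
          rw [mul_Gam_mul_eq hm hn hθs₀.ne' hθx₀.ne']
          split_ifs
          · exact two_mul_le_one_add_mul_one_add hθs₀.le hθs₁ hθx₁ hqs₀ hqs.le hqx.le
          · linarith [two_mul_le_one_add_mul_one_add hθx₀.le hθx₁ hθs₁ hqx₀ hqx.le hqs.le]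

theorem ggamp_scalar_convergence_sufficient_general {m n : ℕ}
    (A : Matrix (Fin m) (Fin n) ℝ)
    (θs θx : ℝ) (hθs : θs ∈ Set.Ioc (0 : ℝ) 1) (hθx : θx ∈ Set.Ioc (0 : ℝ) 1)
    (hΓ : specSq A / frobSq A < Gam m n θs θx) :
    ∀ τ0 vw τs τx : ℝ, 0 < τ0 → 0 < vw →
      IsFixedStepsizes A τ0 vw τs τx →
      ∀ μ : ℂ, HasEig (iterMat A θs θx τs τx) μ → ‖μ‖ < 1 := by
  intro τ0 vw τs τx hτ0 hvw hfix μ hμ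
  have hτs := hfix.1
  have hτx := hfix.2.1
  have hφ := frobSq_nonneg A
  have hqs := hfix.qs_lt_one hvw
  have hqx := hfix.qx_lt_one hτ0
  have hds := abs_one_sub_add_mul_lt_one hθs (by positivity) hqs
  have hdx := abs_one_sub_add_mul_lt_one hθx (by positivity) hqx
  have hc : 0 ≤ θs * θx * τs * τx := by have := hθs.1; have := hθx.1; positivity
  have hF : ‖√(θs * θx * τs * τx) • A‖ ^ 2 = θs * θx * τs * τx * specSq A := by
    rw [norm_smul, mul_pow, Real.norm_eq_abs, sq_abs, Real.sq_sqrt hc, specSq_eq_norm_sq]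
  rcases eq_or_exists_of_hasEig_fromBlocks hμ with rfl | ⟨r, hr₀, hr, hμr⟩
  · rwa [Complex.norm_real, Real.norm_eq_abs]
  · refine norm_lt_one_of_mul_eq_sub_mul_sub hds hdx hr₀ ?_ hμr
    exact (hr.trans_eq hF).trans_lt (mul_specSq_lt_of_lt_Gam hθs hθx hΓ hτs hτx hqs hqx)

/-- **Theorem 2 (sufficiency).** If `Γ(θ_s,θ_x) > ‖A‖₂²/‖A‖_F²`, then for every
prior variance `τ₀ > 0` and noise variance `v_w > 0`, at the fixed-point
stepsizes every eigenvalue of the GGAMP iteration matrix lies strictly inside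
the unit circle. -/
theorem ggamp_scalar_convergence_sufficient {m n : ℕ}
    (A : Matrix (Fin m) (Fin n) ℝ) (hA : A ≠ 0)
    (θs θx : ℝ) (hθs : θs ∈ Set.Ioc (0 : ℝ) 1) (hθx : θx ∈ Set.Ioc (0 : ℝ) 1)
    (hΓ : specSq A / frobSq A < Gam m n θs θx) :
    ∀ τ0 vw τs τx : ℝ, 0 < τ0 → 0 < vw →
      IsFixedStepsizes A τ0 vw τs τx →
      ∀ μ : ℂ, HasEig (iterMat A θs θx τs τx) μ → ‖μ‖ < 1 :=
  ggamp_scalar_convergence_sufficient_general A θs θx hθs hθx hΓ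
end

section
/- Let A be a nonzero real m×n matrix and θ_s, θ_x ∈ (0,1]. Suppose Γ(θ_s,θ_x) < ‖A‖₂²/‖A‖_F². Then there exist a prior variance τ₀ > 0, a noise variance v_w > 0, and scalar GGAMP fixed-point stepsizes (τ_s, τ_x) for (A, τ₀, v_w), such that the GGAMP iteration matrix H has a complex eigenvalue of modulus strictly greater than 1 (i.e., damped scalar-stepsize Gaussian GAMP diverges for sufficiently large τ₀/v_w). -/
/-
Take `τ_s = 1` and `τ_x = t`, and let `v` be a top right singular vector of `A`, so
`Aᵀ A v = ‖A‖₂² v`. Writing `F = c A` with `c² = θ_s θ_x t`, the vector `(F v, (μ - d_s) v)` is an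
eigenvector of `H` with eigenvalue `μ` as soon as `μ² - (d_s + d_x - c²‖A‖₂²) μ + d_s d_x = 0`.
This monic quadratic has a root below `-1` when its value at `-1`, namely
`(1 + d_s)(1 + d_x) - θ_s θ_x t ‖A‖₂²`, is negative. At the threshold `t₀ = min(m, n) / ‖A‖_F²`
(where one of `q_s`, `q_x` equals `1`) this negativity is exactly `Γ < ‖A‖₂² / ‖A‖_F²`; by
continuity it persists for some `t < t₀`, where `q_s, q_x < 1` make `v_w` and `τ₀` positive.
-/

open Matrix

theorem frobSq_pos {m n : ℕ} {A : Matrix (Fin m) (Fin n) ℝ} {i : Fin m} {j : Fin n}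
    (h : A i j ≠ 0) : 0 < frobSq A :=
  calc 0 < A i j ^ 2 := by positivity
    _ ≤ ∑ j, A i j ^ 2 := Finset.single_le_sum (fun _ _ => sq_nonneg _) (Finset.mem_univ j)
    _ ≤ frobSq A := Finset.single_le_sum (f := fun i => ∑ j, A i j ^ 2)
        (fun _ _ => Finset.sum_nonneg fun _ _ => sq_nonneg _) (Finset.mem_univ i)

theorem ContinuousLinearMap.exists_adjoint_apply_apply_eq_sq_opNorm_smul
    {E F : Type*} [NormedAddCommGroup E] [InnerProductSpace ℝ E] [FiniteDimensional ℝ E]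
    [Nontrivial E] [NormedAddCommGroup F] [InnerProductSpace ℝ F] [CompleteSpace F]
    (T : E →L[ℝ] F) : ∃ x, ‖x‖ = 1 ∧ adjoint T (T x) = ‖T‖ ^ 2 • x := by
  obtain ⟨x₀, hx₀, hnorm⟩ := (isCompact_sphere (0 : E) 1).exists_sSup_image_eq
    (NormedSpace.sphere_nonempty.mpr zero_le_one) T.continuous.norm.continuousOn
  rw [T.sSup_sphere_eq_norm] at hnorm
  rw [mem_sphere_zero_iff_norm] at hx₀
  have hre (x : E) : (adjoint T ∘L T).reApplyInnerSelf x = ‖T x‖ ^ 2 := by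
    simp [reApplyInnerSelf, adjoint_inner_left]
  have hmax : IsMaxOn (adjoint T ∘L T).reApplyInnerSelf (Metric.sphere 0 ‖x₀‖) x₀ := by
    intro x hx
    rw [hx₀, mem_sphere_zero_iff_norm] at hx
    simp only [Set.mem_ofPred_eq, hre, ← hnorm]
    gcongr
    simpa [hx] using T.le_opNorm x
  refine ⟨x₀, hx₀, ?_⟩
  have := T.isPositive_adjoint_comp_self.isSelfAdjoint.eq_smul_self_of_isLocalExtrOn
    (Or.inr hmax.localize)
  simpa [rayleighQuotient, hre, hx₀, ← hnorm] using this

theorem Matrix.exists_transpose_mulVec_mulVec_eq_specSq_smul {m n : ℕ} [NeZero n]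
    (A : Matrix (Fin m) (Fin n) ℝ) : ∃ v ≠ 0, Aᵀ *ᵥ (A *ᵥ v) = specSq A • v := by
  obtain ⟨x, hx, hAx⟩ := (LinearMap.toContinuousLinearMap
    (Matrix.toEuclideanLin A)).exists_adjoint_apply_apply_eq_sq_opNorm_smul
  refine ⟨x.ofLp, fun h => by simp [(WithLp.ofLp_eq_zero 2).mp h] at hx, ?_⟩
  rw [← LinearMap.adjoint_toContinuousLinearMap, ← toEuclideanLin_conjTranspose_eq_adjoint,
    conjTranspose_eq_transpose_of_trivial] at hAx
  simpa [specSq, toLpLin_apply] using congrArg WithLp.ofLp hAx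

theorem Matrix.transpose_smul_mulVec_smul_mulVec {R m n : Type*} [CommRing R] [Fintype m]
    [Fintype n] {F : Matrix m n R} {s : R} {v : n → R} (hv : Fᵀ *ᵥ (F *ᵥ v) = s • v) (c : R) :
    (c • F)ᵀ *ᵥ ((c • F) *ᵥ v) = (c * c * s) • v := by
  rw [transpose_smul, smul_mulVec, smul_mulVec, mulVec_smul, hv, smul_smul, smul_smul]

theorem hasEig_of_mulVec_eq_smul {N : Type*} [Fintype N] {M : Matrix N N ℝ} {w : N → ℝ}
    {μ : ℝ} (hw : w ≠ 0) (h : M *ᵥ w = μ • w) : HasEig M μ := by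
  refine ⟨fun i => w i, fun h0 => hw (funext fun i => by simpa using congrFun h0 i), ?_⟩
  funext i
  exact (RingHom.map_mulVec Complex.ofRealHom M w i).symm.trans (by simp [h])

theorem fromBlocks_mulVec_sumElim_eq_smul {R m n : Type*} [CommRing R] [Fintype m] [Fintype n]
    [DecidableEq m] [DecidableEq n] (F : Matrix m n R) {d e s μ : R} {v : n → R}
    (hv : Fᵀ *ᵥ (F *ᵥ v) = s • v) (hμ : μ ^ 2 - (d + e - s) * μ + d * e = 0) :
    fromBlocks (d • 1) F (-(d • Fᵀ)) (e • 1 - Fᵀ * F) *ᵥ Sum.elim (F *ᵥ v) ((μ - d) • v)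
      = μ • Sum.elim (F *ᵥ v) ((μ - d) • v) := by
  have top : (d • 1 : Matrix m m R) *ᵥ F *ᵥ v + F *ᵥ (μ - d) • v = μ • F *ᵥ v := by
    simp only [smul_mulVec, one_mulVec, mulVec_smul]
    match_scalars
    ring
  have bottom : -(d • Fᵀ) *ᵥ F *ᵥ v + (e • 1 - Fᵀ * F) *ᵥ (μ - d) • v = μ • (μ - d) • v := by
    simp only [neg_mulVec, sub_mulVec, ← mulVec_mulVec, smul_mulVec, mulVec_smul, one_mulVec, hv]
    match_scalars
    linear_combination -hμ
  rw [fromBlocks_mulVec, Sum.elim_comp_inl, Sum.elim_comp_inr, top, bottom]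
  ext (i | j) <;> rfl

theorem exists_quadratic_root_lt_neg_one {b c : ℝ} (h : 1 + b + c < 0) :
    ∃ x < -1, x ^ 2 - b * x + c = 0 := by
  have hD : 0 ≤ b ^ 2 - 4 * c := by nlinarith [sq_nonneg (b + 2)]
  refine ⟨(b - √(b ^ 2 - 4 * c)) / 2, ?_, ?_⟩
  · have : b + 2 < √(b ^ 2 - 4 * c) := Real.lt_sqrt_of_sq_lt (by linarith)
    linarith
  · linear_combination (1 / 4 : ℝ) * Real.sq_sqrt hD

theorem exists_hasEig_fromBlocks_one_lt_norm {m n : Type*} [Fintype m] [Fintype n]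
    [DecidableEq m] [DecidableEq n] (F : Matrix m n ℝ) {d e s : ℝ} {v : n → ℝ} (hv0 : v ≠ 0)
    (hv : Fᵀ *ᵥ (F *ᵥ v) = s • v) (hd : -1 ≤ d) (hgap : (1 + d) * (1 + e) < s) :
    ∃ μ : ℂ, HasEig (fromBlocks (d • 1) F (-(d • Fᵀ)) (e • 1 - Fᵀ * F)) μ ∧ 1 < ‖μ‖ := by
  obtain ⟨μ, hμ, hroot⟩ := exists_quadratic_root_lt_neg_one (b := d + e - s) (c := d * e)
    (by linarith [show (1 + d) * (1 + e) = 1 + d + e + d * e by ring])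
  refine ⟨μ, hasEig_of_mulVec_eq_smul (fun h => hv0 ?_)
    (fromBlocks_mulVec_sumElim_eq_smul F hv hroot), ?_⟩
  · have : (μ - d) • v = 0 := funext fun j => congrFun h (Sum.inr j)
    exact (smul_eq_zero.mp this).resolve_left (by linarith)
  · rw [Complex.norm_real, Real.norm_eq_abs, abs_of_neg (by linarith)]
    linarith

theorem damping_gap_at_threshold {m n : ℕ} (hm : 0 < m) (hn : 0 < n) {θs θx φ σ : ℝ}
    (hφ : 0 < φ) (hθs : 0 < θs) (hθx : 0 < θx) (hΓ : Gam m n θs θx < σ / φ) :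
    (2 - θs + θs * (φ / m * (min m n / φ))) * (2 - θx + θx * (φ / n * (min m n / φ)))
      < θs * θx * (min m n / φ) * σ := by
  have hm' : (0 : ℝ) < m := by exact_mod_cast hm
  have hn' : (0 : ℝ) < n := by exact_mod_cast hn
  rw [Gam] at hΓ
  split_ifs at hΓ with h
  · rw [div_lt_div_iff₀ (by positivity) hφ] at hΓ
    rw [min_eq_right h]
    field_simp
    linarith
  · rw [div_lt_div_iff₀ (by positivity) hφ] at hΓ
    rw [min_eq_left (not_le.mp h).le]
    field_simp
    linarith

theorem exists_mem_Ioo_pos_of_continuousAt {g : ℝ → ℝ} {a b : ℝ} (hg : ContinuousAt g a)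
    (hba : b < a) (hga : 0 < g a) : ∃ t ∈ Set.Ioo b a, 0 < g t :=
  (((hg.eventually (lt_mem_nhds hga)).filter_mono nhdsWithin_le_nhds).and
    (Ioo_mem_nhdsLT hba)).exists.imp fun _ h => ⟨h.2, h.1⟩

theorem exists_damping_gap {m n : ℕ} (hm : 0 < m) (hn : 0 < n) {θs θx φ σ : ℝ}
    (hφ : 0 < φ) (hθs : 0 < θs) (hθx : 0 < θx) (hΓ : Gam m n θs θx < σ / φ) :
    ∃ t > 0, φ / m * t < 1 ∧ φ / n * t < 1 ∧
      (2 - θs + θs * (φ / m * t)) * (2 - θx + θx * (φ / n * t)) < θs * θx * t * σ := by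
  have hm' : (0 : ℝ) < m := by exact_mod_cast hm
  have hn' : (0 : ℝ) < n := by exact_mod_cast hn
  obtain ⟨t, ⟨ht, htt₀⟩, hgap⟩ := exists_mem_Ioo_pos_of_continuousAt
    (g := fun t => θs * θx * t * σ - (2 - θs + θs * (φ / m * t)) * (2 - θx + θx * (φ / n * t)))
    (by fun_prop) (by positivity : (0 : ℝ) < min m n / φ)
    (sub_pos.mpr (damping_gap_at_threshold hm hn hφ hθs hθx hΓ))
  have hφt : φ * t < min m n := by rwa [lt_div_iff₀ hφ, mul_comm] at htt₀
  refine ⟨t, ht, ?_, ?_, sub_pos.mp hgap⟩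
  · rw [div_mul_eq_mul_div, div_lt_one hm']
    exact hφt.trans_le (by exact_mod_cast min_le_left m n)
  · rw [div_mul_eq_mul_div, div_lt_one hn']
    exact hφt.trans_le (by exact_mod_cast min_le_right m n)

theorem isFixedStepsizes_one_left {m n : ℕ} (A : Matrix (Fin m) (Fin n) ℝ) {t : ℝ}
    (ht : 0 < t) : IsFixedStepsizes A (1 / (1 / t - frobSq A / n)) (1 - frobSq A / m * t) 1 t :=
  ⟨one_pos, ht, by ring, by rw [one_div_one_div]; ring⟩

/-- **Theorem 2 (necessity).** If `Γ(θ_s,θ_x) < ‖A‖₂²/‖A‖_F²`, then there exist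
a prior variance `τ₀ > 0`, a noise variance `v_w > 0` and fixed-point stepsizes
`(τ_s, τ_x)` for which the GGAMP iteration matrix has an eigenvalue of modulus
strictly greater than 1. -/
theorem ggamp_scalar_divergence_necessary {m n : ℕ}
    (A : Matrix (Fin m) (Fin n) ℝ) (hA : A ≠ 0)
    (θs θx : ℝ) (hθs : θs ∈ Set.Ioc (0 : ℝ) 1) (hθx : θx ∈ Set.Ioc (0 : ℝ) 1)
    (hΓ : Gam m n θs θx < specSq A / frobSq A) :
    ∃ τ0 vw τs τx : ℝ, 0 < τ0 ∧ 0 < vw ∧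
      IsFixedStepsizes A τ0 vw τs τx ∧
      ∃ μ : ℂ, HasEig (iterMat A θs θx τs τx) μ ∧ 1 < ‖μ‖ := by
  obtain ⟨i, j, hij⟩ : ∃ i j, A i j ≠ 0 := by
    by_contra! h
    exact hA (Matrix.ext h)
  have : NeZero n := ⟨j.pos.ne'⟩
  have hφ := frobSq_pos hij
  obtain ⟨t, ht, htm, htn, hgap⟩ := exists_damping_gap i.pos j.pos hφ hθs.1 hθx.1 hΓ
  obtain ⟨v, hv0, hv⟩ := A.exists_transpose_mulVec_mulVec_eq_specSq_smul
  have hF := transpose_smul_mulVec_smul_mulVec hv √(θs * θx * 1 * t)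
  rw [Real.mul_self_sqrt (by have := hθs.1; have := hθx.1; positivity)] at hF
  have hqs : 0 < 1 * (frobSq A / m) * t := by have := i.pos; positivity
  refine ⟨_, _, 1, t, one_div_pos.mpr (sub_pos.mpr ((lt_div_iff₀ ht).mpr htn)), by linarith,
    isFixedStepsizes_one_left A ht, exists_hasEig_fromBlocks_one_lt_norm _ hv0 hF ?_ ?_⟩
  · nlinarith [mul_pos hθs.1 hqs, hθs.2]
  · convert hgap using 1 <;> ring
end

section
/- Let A be a real m×n matrix whose columns all have unit Euclidean norm (so that ‖A‖_F² = n), and suppose the walk-summability condition λ_max(|I_n − AᵀA|) < 1 holds, where |I_n − AᵀA| denotes the entrywise absolute value and λ_max the largest eigenvalue of this symmetric nonnegative matrix. Then ‖A‖₂² ≤ 1 + λ_max(|I_n − AᵀA|) < 2, and consequently κ(A) < 2·min{m,n}/n ≤ 2·min{m,n}·(m+n)/(mn) = min{m,n}·Γ(1,1); hence walk summability implies the (undamped) GGAMP convergence condition. -/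
open Matrix

/-- Peak-to-average ratio of the squared singular values. -/
noncomputable def kappa {m n : ℕ} (A : Matrix (Fin m) (Fin n) ℝ) : ℝ :=
  specSq A / (frobSq A / (min m n : ℝ))

/-- Largest real eigenvalue of a real square matrix. -/
noncomputable def lamMax {n : ℕ} (M : Matrix (Fin n) (Fin n) ℝ) : ℝ :=
  sSup {μ : ℝ | ∃ v : Fin n → ℝ, v ≠ 0 ∧ M.mulVec v = μ • v}

/-!
Put `M = I - AᵀA`. For every `x`,
`‖Ax‖² = ‖x‖² - xᵀMx ≤ ‖x‖² + |x|ᵀ|M||x| ≤ (1 + λ_max(|M|)) ‖x‖²`,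
the last step being the Rayleigh bound for the symmetric matrix `|M|`, which follows from
`λ_max(|M|) I - |M|` being positive semidefinite by the spectral theorem. Unit columns give
`‖A‖_F² = n`, so `κ(A) = ‖A‖₂² min{m,n} / n < 2 min{m,n} / n`, and the remaining claims are
arithmetic, with `Γ(1,1) = 2(m+n)/(mn)` whichever of `m`, `n` is larger.
-/

namespace Matrix

open scoped ComplexOrder in
theorem IsHermitian.posSemidef_smul_one_sub {ι 𝕜 : Type*} [Fintype ι] [DecidableEq ι]
    [RCLike 𝕜] {A : Matrix ι ι 𝕜} (hA : A.IsHermitian) {c : ℝ}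
    (hc : ∀ i, hA.eigenvalues i ≤ c) :
    ((c : 𝕜) • 1 - A).PosSemidef := by
  rw [hA.spectral_theorem, ← map_one (Unitary.conjStarAlgAut 𝕜 _ hA.eigenvectorUnitary),
    ← map_smul, ← map_sub, Unitary.conjStarAlgAut_apply,
    Unitary.isUnit_coe.posSemidef_star_right_conjugate_iff,
    smul_one_eq_diagonal, diagonal_sub, posSemidef_diagonal_iff]
  simpa [sub_nonneg] using hc

theorem abs_dotProduct_mulVec_le {ι R : Type*} [Fintype ι] [CommRing R] [LinearOrder R]
    [IsStrictOrderedRing R] (x : ι → R) (M : Matrix ι ι R) (y : ι → R) :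
    |x ⬝ᵥ M *ᵥ y| ≤ |x| ⬝ᵥ M.map abs *ᵥ |y| := by
  simp only [dotProduct, mulVec, map_apply, Pi.abs_apply]
  refine (Finset.abs_sum_le_sum_abs _ _).trans (Finset.sum_le_sum fun i _ => ?_)
  rw [abs_mul]
  gcongr
  exact (Finset.abs_sum_le_sum_abs _ _).trans_eq (by simp only [abs_mul])

variable {m n : ℕ}

theorem bddAbove_setOf_mulVec_eq_smul (N : Matrix (Fin n) (Fin n) ℝ) :
    BddAbove {μ : ℝ | ∃ v : Fin n → ℝ, v ≠ 0 ∧ N *ᵥ v = μ • v} := by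
  refine ((Module.End.finite_hasEigenvalue (toLin' N)).subset ?_).bddAbove
  rintro μ ⟨v, hv, hNv⟩
  exact Module.End.hasEigenvalue_of_hasEigenvector ⟨Module.End.mem_eigenspace_iff.2 hNv, hv⟩

namespace IsHermitian

variable {N : Matrix (Fin n) (Fin n) ℝ}

theorem eigenvalues_le_lamMax (hN : N.IsHermitian) (i : Fin n) : hN.eigenvalues i ≤ lamMax N :=
  le_csSup (bddAbove_setOf_mulVec_eq_smul N)
    ⟨_, (WithLp.ofLp_eq_zero 2).ne.2 (hN.eigenvectorBasis.orthonormal.ne_zero i),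
      hN.mulVec_eigenvectorBasis i⟩

theorem dotProduct_mulVec_le_lamMax (hN : N.IsHermitian) (x : Fin n → ℝ) :
    x ⬝ᵥ N *ᵥ x ≤ lamMax N * (x ⬝ᵥ x) := by
  have := (hN.posSemidef_smul_one_sub hN.eigenvalues_le_lamMax).dotProduct_mulVec_nonneg x
  rw [star_trivial, sub_mulVec, dotProduct_sub, smul_mulVec, one_mulVec, dotProduct_smul,
    smul_eq_mul, RCLike.ofReal_real_eq_id, id] at this
  linarith

theorem diag_le_lamMax (hN : N.IsHermitian) (i : Fin n) : N i i ≤ lamMax N := by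
  simpa using hN.dotProduct_mulVec_le_lamMax (Pi.single i 1)

end IsHermitian

theorem isHermitian_map_abs_one_sub_transpose_mul_self (A : Matrix (Fin m) (Fin n) ℝ) :
    ((1 - Aᵀ * A).map abs).IsHermitian :=
  (isHermitian_one.sub (isHermitian_conjTranspose_mul_self A)).map abs fun _ => rfl

theorem mulVec_dotProduct_mulVec_le (A : Matrix (Fin m) (Fin n) ℝ) (x : Fin n → ℝ) :
    A *ᵥ x ⬝ᵥ A *ᵥ x ≤ (1 + lamMax ((1 - Aᵀ * A).map abs)) * (x ⬝ᵥ x) := by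
  have hxx : |x| ⬝ᵥ |x| = x ⬝ᵥ x := by simp [dotProduct, abs_mul_abs_self]
  calc A *ᵥ x ⬝ᵥ A *ᵥ x = x ⬝ᵥ x - x ⬝ᵥ (1 - Aᵀ * A) *ᵥ x := by
        rw [sub_mulVec, one_mulVec, dotProduct_sub, sub_sub_cancel, ← mulVec_mulVec,
          dotProduct_mulVec x, vecMul_transpose]
    _ ≤ x ⬝ᵥ x + |x| ⬝ᵥ (1 - Aᵀ * A).map abs *ᵥ |x| := by
      linarith [neg_abs_le (x ⬝ᵥ (1 - Aᵀ * A) *ᵥ x),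
        abs_dotProduct_mulVec_le x (1 - Aᵀ * A) x]
    _ ≤ x ⬝ᵥ x + lamMax ((1 - Aᵀ * A).map abs) * (|x| ⬝ᵥ |x|) := by
      gcongr
      exact (isHermitian_map_abs_one_sub_transpose_mul_self A).dotProduct_mulVec_le_lamMax |x|
    _ = _ := by rw [hxx]; ring

theorem specSq_le_of_forall_mulVec_dotProduct_le {A : Matrix (Fin m) (Fin n) ℝ} {c : ℝ}
    (hc : 0 ≤ c) (h : ∀ x, A *ᵥ x ⬝ᵥ A *ᵥ x ≤ c * (x ⬝ᵥ x)) : specSq A ≤ c := by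
  have hnorm : ‖LinearMap.toContinuousLinearMap (toEuclideanLin A)‖ ≤ √c := by
    refine ContinuousLinearMap.opNorm_le_bound _ (Real.sqrt_nonneg c) fun x => ?_
    refine (pow_le_pow_iff_left₀ (norm_nonneg _) (by positivity) two_ne_zero).1 ?_
    rw [mul_pow, Real.sq_sqrt hc, ← real_inner_self_eq_norm_sq, ← real_inner_self_eq_norm_sq]
    simpa only [EuclideanSpace.inner_eq_star_dotProduct, star_trivial,
      LinearMap.coe_toContinuousLinearMap', ofLp_toLpLin, toLin'_apply] using h x.ofLp
  calc specSq A ≤ √c ^ 2 := pow_le_pow_left₀ (norm_nonneg _) hnorm 2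
    _ = c := Real.sq_sqrt hc

end Matrix

theorem frobSq_eq_of_forall_sum_sq_col_eq_one {m n : ℕ} {A : Matrix (Fin m) (Fin n) ℝ}
    (hcol : ∀ j, ∑ i, A i j ^ 2 = 1) : frobSq A = n := by
  simp [frobSq, Finset.sum_comm (γ := Fin m), hcol]

theorem Gam_one_one (m n : ℕ) : Gam m n 1 1 = 2 * (m + n) / (m * n) := by
  unfold Gam
  split_ifs <;> ring_nf

/-- **Walk-summable matrices.** If the columns of `A` have unit norm (so
`‖A‖_F² = n`) and `λ_max(|Iₙ − AᵀA|) < 1`, then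
`‖A‖₂² ≤ 1 + λ_max(|Iₙ − AᵀA|) < 2` and
`κ(A) < 2 min{m,n}/n ≤ 2 min{m,n}(m+n)/(mn) = min{m,n}·Γ(1,1)`. -/
theorem walk_summable_implies_ggamp_convergence {m n : ℕ} (hm : 0 < m) (hn : 0 < n)
    (A : Matrix (Fin m) (Fin n) ℝ)
    (hcol : ∀ j, ∑ i, (A i j) ^ 2 = 1)
    (hws : lamMax (fun i j => |((1 : Matrix (Fin n) (Fin n) ℝ) - Aᵀ * A) i j|) < 1) :
    specSq A ≤ 1 + lamMax (fun i j => |((1 : Matrix (Fin n) (Fin n) ℝ) - Aᵀ * A) i j|) ∧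
    specSq A < 2 ∧
    kappa A < 2 * (min m n : ℝ) / (n : ℝ) ∧
    2 * (min m n : ℝ) / (n : ℝ) ≤ 2 * (min m n : ℝ) * ((m : ℝ) + n) / ((m : ℝ) * n) ∧
    2 * (min m n : ℝ) * ((m : ℝ) + n) / ((m : ℝ) * n) = (min m n : ℝ) * Gam m n 1 1 := by
  change lamMax ((1 - Aᵀ * A).map abs) < 1 at hws
  have hL : 0 ≤ lamMax ((1 - Aᵀ * A).map abs) := (abs_nonneg _).trans
    ((isHermitian_map_abs_one_sub_transpose_mul_self A).diag_le_lamMax ⟨0, hn⟩)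
  have hspec : specSq A ≤ 1 + lamMax ((1 - Aᵀ * A).map abs) :=
    specSq_le_of_forall_mulVec_dotProduct_le (by linarith) (mulVec_dotProduct_mulVec_le A)
  have hspec_lt : specSq A < 2 := by linarith
  refine ⟨hspec, hspec_lt, ?_, ?_, by rw [Gam_one_one]; ring⟩
  · rw [kappa, frobSq_eq_of_forall_sum_sq_col_eq_one hcol, div_div_eq_mul_div]
    gcongr
  · calc _ = 2 * (min m n : ℝ) * m / (m * n) := by field_simp
      _ ≤ _ := by gcongr; linarith
end

section
/- Let F be a complex m×n matrix, let D_s ∈ ℂ^{m×m} and D_x ∈ ℂ^{n×n} be real diagonal matrices with all diagonal entries in [0,1), let H := [[D_s, F],[−F*D_s, D_x − F*F]] be the (m+n)×(m+n) block matrix, and let λ ∈ ℂ with |λ| ≥ 1. Then λI_{m+n} − H is invertible if and only if the n×n matrix J_λ := λI_n − D_x + λ·F*(λI_m − D_s)^{−1}F is invertible. (Note λI_m − D_s is invertible since |λ| ≥ 1 exceeds every diagonal entry of D_s.) -/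
/-!
Since every `|d_s i| < 1 ≤ |λ|`, the upper-left block `λI − D_s` of `λI − H` is invertible, so
`λI − H` is invertible iff its Schur complement `λI − D_x + F*F + F*D_s(λI − D_s)⁻¹F` is. That
complement is `J_λ`, because `I + D_s(λI − D_s)⁻¹ = ((λI − D_s) + D_s)(λI − D_s)⁻¹ = λ(λI − D_s)⁻¹`.
-/

open Matrix

namespace Matrix

variable {K : Type*} [CommRing K] {m n : Type*} [Fintype m] [Fintype n] [DecidableEq m] [DecidableEq n]

theorem one_add_mul_inv_smul_one_sub {lam : K} {D : Matrix m m K}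
    (h : IsUnit (lam • 1 - D)) : 1 + D * (lam • 1 - D)⁻¹ = lam • (lam • 1 - D)⁻¹ := by
  have hA := (lam • (1 : Matrix m m K) - D).mul_nonsing_inv ((isUnit_iff_isUnit_det _).mp h)
  calc 1 + D * (lam • 1 - D)⁻¹ = (lam • 1 - D + D) * (lam • 1 - D)⁻¹ := by
        rw [Matrix.add_mul, hA]
    _ = lam • (lam • 1 - D)⁻¹ := by rw [sub_add_cancel, smul_mul, Matrix.one_mul]

theorem isUnit_smul_one_sub_fromBlocks_iff {lam : K} {D : Matrix m m K}
    (F : Matrix m n K) (G : Matrix n m K) (E : Matrix n n K) (hA : IsUnit (lam • 1 - D)) :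
    IsUnit (lam • 1 - fromBlocks D F (-(G * D)) (E - G * F)) ↔
      IsUnit (lam • 1 - E + lam • (G * (lam • 1 - D)⁻¹ * F)) := by
  let := hA.invertible
  have hblocks : lam • 1 - fromBlocks D F (-(G * D)) (E - G * F) =
      fromBlocks (lam • 1 - D) (-F) (G * D) (lam • 1 - (E - G * F)) := by
    rw [← fromBlocks_one, fromBlocks_smul, sub_eq_add_neg, fromBlocks_neg, fromBlocks_add]
    simp only [smul_zero, zero_add, neg_neg, ← sub_eq_add_neg, zero_sub]
  have hschur : lam • 1 - (E - G * F) - G * D * ⅟(lam • 1 - D) * (-F) =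
      lam • 1 - E + lam • (G * (lam • 1 - D)⁻¹ * F) := by
    rw [invOf_eq_nonsing_inv, ← Matrix.smul_mul, ← Matrix.mul_smul,
      ← one_add_mul_inv_smul_one_sub hA]
    simp only [Matrix.mul_add, Matrix.add_mul, Matrix.mul_one, Matrix.mul_neg, Matrix.mul_assoc]
    abel
  rw [hblocks, isUnit_fromBlocks_iff_of_invertible₁₁, hschur]

theorem isUnit_smul_one_sub_diagonal {𝕜 : Type*} [NormedField 𝕜] {lam : 𝕜} {d : m → 𝕜}
    (h : ∀ i, ‖d i‖ < ‖lam‖) : IsUnit (lam • (1 : Matrix m m 𝕜) - diagonal d) := by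
  rw [smul_one_eq_diagonal, diagonal_sub, isUnit_diagonal, Pi.isUnit_iff]
  exact fun i => (sub_ne_zero.mpr fun hi => (h i).ne (congrArg norm hi).symm).isUnit

end Matrix

theorem gamp_schur_complement_invertibility_general {m n : ℕ}
    (F : Matrix (Fin m) (Fin n) ℂ)
    (ds : Fin m → ℝ) (hds : ∀ i, ds i ∈ Set.Ico (0 : ℝ) 1)
    (dx : Fin n → ℝ)
    (lam : ℂ) (hlam : 1 ≤ ‖lam‖) :
    IsUnit
      (lam • (1 : Matrix (Fin m ⊕ Fin n) (Fin m ⊕ Fin n) ℂ) -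
        Matrix.fromBlocks
          (Matrix.diagonal (fun i => (ds i : ℂ))) F
          (-(Fᴴ * Matrix.diagonal (fun i => (ds i : ℂ))))
          (Matrix.diagonal (fun j => (dx j : ℂ)) - Fᴴ * F)) ↔
    IsUnit
      (lam • (1 : Matrix (Fin n) (Fin n) ℂ) - Matrix.diagonal (fun j => (dx j : ℂ)) +
        lam • (Fᴴ *
          (lam • (1 : Matrix (Fin m) (Fin m) ℂ) -
            Matrix.diagonal (fun i => (ds i : ℂ)))⁻¹ * F)) := by
  have hds_norm : ∀ i, ‖(ds i : ℂ)‖ < ‖lam‖ := fun i => by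
    rw [Complex.norm_real, Real.norm_of_nonneg (hds i).1]
    exact (hds i).2.trans_le hlam
  exact isUnit_smul_one_sub_fromBlocks_iff F Fᴴ _ (isUnit_smul_one_sub_diagonal hds_norm)

/-- **Lemma 1 (Appendix B).** For `|λ| ≥ 1` and real diagonal `D_s, D_x` with
entries in `[0,1)`, the matrix `λI − H`, where
`H = [[D_s, F], [−F*D_s, D_x − F*F]]`, is invertible if and only if the
Schur-complement-type matrix `J_λ = λIₙ − D_x + λ·F*(λIₘ − D_s)⁻¹F` is. -/
theorem gamp_schur_complement_invertibility {m n : ℕ}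
    (F : Matrix (Fin m) (Fin n) ℂ)
    (ds : Fin m → ℝ) (hds : ∀ i, ds i ∈ Set.Ico (0 : ℝ) 1)
    (dx : Fin n → ℝ) (hdx : ∀ j, dx j ∈ Set.Ico (0 : ℝ) 1)
    (lam : ℂ) (hlam : 1 ≤ ‖lam‖) :
    IsUnit
      (lam • (1 : Matrix (Fin m ⊕ Fin n) (Fin m ⊕ Fin n) ℂ) -
        Matrix.fromBlocks
          (Matrix.diagonal (fun i => (ds i : ℂ))) F
          (-(Fᴴ * Matrix.diagonal (fun i => (ds i : ℂ))))
          (Matrix.diagonal (fun j => (dx j : ℂ)) - Fᴴ * F)) ↔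
    IsUnit
      (lam • (1 : Matrix (Fin n) (Fin n) ℂ) - Matrix.diagonal (fun j => (dx j : ℂ)) +
        lam • (Fᴴ *
          (lam • (1 : Matrix (Fin m) (Fin m) ℂ) -
            Matrix.diagonal (fun i => (ds i : ℂ)))⁻¹ * F)) :=
  gamp_schur_complement_invertibility_general F ds hds dx lam hlam
end

section
/- Let F be a complex m×n matrix with operator norm ‖F‖₂ < 1, let D_s ∈ ℂ^{m×m} and D_x ∈ ℂ^{n×n} be real diagonal matrices with all diagonal entries in [0,1), and let λ ∈ ℂ with |λ| ≥ 1. Then the matrix J_λ := λI_n − D_x + λ·F*(λI_m − D_s)^{−1}F is invertible. -/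
open Matrix

/-!
If `J_λ x = 0`, put `y = (λ - D_s)⁻¹ F x`, so that `(λ - D_x) x + λ F* y = 0` and
`(λ - D_s) y = F x`.

When `Re λ ≤ 0`, every `|λ - d|` with `d ≥ 0` is at least `|λ| ≥ 1`, so the two equations give
`‖x‖ ≤ ‖F‖ ‖y‖` and `‖y‖ ≤ ‖F‖ ‖x‖`, which force `x = 0` because `‖F‖ < 1`.

When `Re λ ≥ 0`, pairing the first equation with `x` and using the second gives
`λ (‖x‖² - ⟨y, D_s y⟩) - ⟨x, D_x x⟩ + |λ|² ‖y‖² = 0`.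
Its imaginary part forces either `λ` real, hence `λ ≥ 1`, or `‖x‖² = ⟨y, D_s y⟩`; in both cases the real part is positive unless `x = 0`.
-/

/-- Spectral (ℓ²-operator) norm of a complex matrix. -/
noncomputable def specNormC {m n : ℕ} (A : Matrix (Fin m) (Fin n) ℂ) : ℝ :=
  ‖LinearMap.toContinuousLinearMap (Matrix.toEuclideanLin A)‖

lemma specNormC_conjTranspose {m n : ℕ} (A : Matrix (Fin m) (Fin n) ℂ) :
    specNormC Aᴴ = specNormC A := by
  unfold specNormC
  rw [Matrix.toEuclideanLin_conjTranspose_eq_adjoint,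
    LinearMap.adjoint_toContinuousLinearMap]
  exact LinearIsometryEquiv.norm_map ContinuousLinearMap.adjoint _

lemma norm_toLp_mulVec_le {m n : ℕ} (A : Matrix (Fin m) (Fin n) ℂ) (v : Fin n → ℂ) :
    ‖WithLp.toLp 2 (A *ᵥ v)‖ ≤ specNormC A * ‖WithLp.toLp 2 v‖ :=
  (LinearMap.toContinuousLinearMap (Matrix.toEuclideanLin A)).le_opNorm (WithLp.toLp 2 v)

lemma mul_norm_toLp_le_norm_toLp_diagonal_mulVec {ι : Type*} [Fintype ι] [DecidableEq ι]
    {a : ι → ℂ} {c : ℝ} (hc0 : 0 ≤ c) (hc : ∀ i, c ≤ ‖a i‖) (v : ι → ℂ) :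
    c * ‖WithLp.toLp 2 v‖ ≤ ‖WithLp.toLp 2 (diagonal a *ᵥ v)‖ := by
  rw [EuclideanSpace.norm_eq, EuclideanSpace.norm_eq, ← Real.sqrt_sq hc0,
    ← Real.sqrt_mul (sq_nonneg c), Finset.mul_sum]
  gcongr with i
  simp only [mulVec_diagonal, norm_mul, mul_pow]
  gcongr
  exact hc i

lemma norm_le_norm_sub_ofReal_of_re_nonpos {z : ℂ} (hz : z.re ≤ 0) {d : ℝ} (hd : 0 ≤ d) :
    ‖z‖ ≤ ‖z - d‖ := by
  rw [Complex.norm_def, Complex.norm_def]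
  gcongr
  simp only [Complex.normSq_apply, Complex.sub_re, Complex.ofReal_re, Complex.sub_im,
    Complex.ofReal_im, sub_zero]
  nlinarith

lemma star_dotProduct_diagonal_sub_mulVec {ι : Type*} [Fintype ι] [DecidableEq ι]
    (c : ℂ) (d : ι → ℝ) (v : ι → ℂ) :
    star v ⬝ᵥ (diagonal (fun i => c - d i) *ᵥ v) =
      c * ↑(∑ i, ‖v i‖ ^ 2) - ↑(∑ i, d i * ‖v i‖ ^ 2) := by
  push_cast
  rw [Finset.mul_sum, ← Finset.sum_sub_distrib]
  refine Finset.sum_congr rfl fun i _ => ?_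
  rw [mulVec_diagonal, Pi.star_apply, Complex.star_def, ← Complex.conj_mul']
  ring

lemma sum_mul_norm_sq_le {ι E : Type*} [Fintype ι] [NormedAddCommGroup E] {d : ι → ℝ}
    (hd : ∀ i, d i ≤ 1) (v : ι → E) : ∑ i, d i * ‖v i‖ ^ 2 ≤ ∑ i, ‖v i‖ ^ 2 :=
  Finset.sum_le_sum fun i _ => mul_le_of_le_one_left (sq_nonneg _) (hd i)

lemma sum_mul_norm_sq_lt {ι E : Type*} [Fintype ι] [NormedAddCommGroup E] {d : ι → ℝ}
    (hd : ∀ i, d i < 1) {v : ι → E} (hv : v ≠ 0) : ∑ i, d i * ‖v i‖ ^ 2 < ∑ i, ‖v i‖ ^ 2 := by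
  obtain ⟨i, hi⟩ := Function.ne_iff.mp hv
  refine Finset.sum_lt_sum (fun j _ => mul_le_of_le_one_left (sq_nonneg _) (hd j).le)
    ⟨i, Finset.mem_univ _, ?_⟩
  exact mul_lt_of_lt_one_left (pow_pos (norm_pos_iff.mpr hi) 2) (hd i)

lemma mul_sub_add_mul_star_mul_sub_ne_zero {lam : ℂ} (hlam : 1 ≤ ‖lam‖) (hre : 0 ≤ lam.re)
    {nx qx ny qs : ℝ} (hqx : 0 ≤ qx) (hqxnx : qx < nx) (hqs : 0 ≤ qs) (hqsny : qs ≤ ny) :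
    lam * nx - qx + lam * (star lam * ny - qs) ≠ 0 := by
  intro h
  replace h : lam * (nx - qs) - qx + Complex.normSq lam * ny = 0 := by
    rw [← Complex.mul_conj, ← Complex.star_def]; linear_combination h
  have him : lam.im * (nx - qs) = 0 := by simpa using congrArg Complex.im h
  have hreal : lam.re * (nx - qs) - qx + Complex.normSq lam * ny = 0 := by
    simpa using congrArg Complex.re h
  have hnormSq : 1 ≤ Complex.normSq lam := by
    rw [Complex.normSq_eq_norm_sq]; nlinarith
  rcases mul_eq_zero.mp him with him0 | hnq
  · have hre1 : 1 ≤ lam.re := by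
      rw [Complex.normSq_apply, him0] at hnormSq; nlinarith
    rw [Complex.normSq_apply, him0] at hreal
    nlinarith [mul_nonneg (sub_nonneg.2 hre1) (hqx.trans hqxnx.le),
      mul_nonneg (mul_nonneg hre (sub_nonneg.2 hre1)) (hqs.trans hqsny),
      mul_nonneg hre (sub_nonneg.2 hqsny)]
  · nlinarith

section GampSystem

variable {m n : ℕ} {F : Matrix (Fin m) (Fin n) ℂ} {ds : Fin m → ℝ} {dx : Fin n → ℝ} {lam : ℂ}
  {x : Fin n → ℂ} {y : Fin m → ℂ}

lemma gamp_energy_identity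
    (hx : diagonal (fun j => lam - dx j) *ᵥ x + lam • (Fᴴ *ᵥ y) = 0)
    (hy : diagonal (fun i => lam - ds i) *ᵥ y = F *ᵥ x) :
    lam * ↑(∑ j, ‖x j‖ ^ 2) - ↑(∑ j, dx j * ‖x j‖ ^ 2) +
      lam * (star lam * ↑(∑ i, ‖y i‖ ^ 2) - ↑(∑ i, ds i * ‖y i‖ ^ 2)) = 0 := by
  have hFy : star x ⬝ᵥ (Fᴴ *ᵥ y) =
      star y ⬝ᵥ (diagonal (fun i => star lam - ds i) *ᵥ y) := by
    rw [dotProduct_mulVec, ← star_mulVec, ← hy, star_mulVec, ← dotProduct_mulVec,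
      diagonal_conjTranspose]
    congr 3 with i
    simp
  simpa only [dotProduct_add, dotProduct_smul, dotProduct_zero, hFy,
    star_dotProduct_diagonal_sub_mulVec, smul_eq_mul] using congrArg (star x ⬝ᵥ ·) hx

lemma gamp_eq_zero_of_re_nonpos (hF : specNormC F < 1) (hds : ∀ i, 0 ≤ ds i)
    (hdx : ∀ j, 0 ≤ dx j) (hlam : 1 ≤ ‖lam‖) (hre : lam.re ≤ 0)
    (hx : diagonal (fun j => lam - dx j) *ᵥ x + lam • (Fᴴ *ᵥ y) = 0)
    (hy : diagonal (fun i => lam - ds i) *ᵥ y = F *ᵥ x) : x = 0 := by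
  set σ := specNormC F
  have hσ : 0 ≤ σ := norm_nonneg _
  have hlam0 : 0 < ‖lam‖ := one_pos.trans_le hlam
  have hxy : ‖WithLp.toLp 2 x‖ ≤ σ * ‖WithLp.toLp 2 y‖ := by
    refine le_of_mul_le_mul_left ?_ hlam0
    calc ‖lam‖ * ‖WithLp.toLp 2 x‖
        ≤ ‖WithLp.toLp 2 (diagonal (fun j => lam - dx j) *ᵥ x)‖ :=
          mul_norm_toLp_le_norm_toLp_diagonal_mulVec (norm_nonneg _)
            (fun j => norm_le_norm_sub_ofReal_of_re_nonpos hre (hdx j)) x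
      _ = ‖lam‖ * ‖WithLp.toLp 2 (Fᴴ *ᵥ y)‖ := by
          rw [eq_neg_of_add_eq_zero_left hx, WithLp.toLp_neg, WithLp.toLp_smul, norm_neg,
            norm_smul]
      _ ≤ ‖lam‖ * (σ * ‖WithLp.toLp 2 y‖) := by
          gcongr
          simpa [specNormC_conjTranspose] using norm_toLp_mulVec_le Fᴴ y
  have hyx : ‖WithLp.toLp 2 y‖ ≤ σ * ‖WithLp.toLp 2 x‖ :=
    calc ‖WithLp.toLp 2 y‖
        ≤ ‖lam‖ * ‖WithLp.toLp 2 y‖ := le_mul_of_one_le_left (norm_nonneg _) hlam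
      _ ≤ ‖WithLp.toLp 2 (diagonal (fun i => lam - ds i) *ᵥ y)‖ :=
          mul_norm_toLp_le_norm_toLp_diagonal_mulVec (norm_nonneg _)
            (fun i => norm_le_norm_sub_ofReal_of_re_nonpos hre (hds i)) y
      _ ≤ σ * ‖WithLp.toLp 2 x‖ := hy ▸ norm_toLp_mulVec_le F x
  have hσ1 : σ * σ < 1 := by nlinarith
  have : ‖WithLp.toLp 2 x‖ = 0 := by nlinarith [norm_nonneg (WithLp.toLp 2 x)]
  simpa using this

lemma gamp_eq_zero_of_re_nonneg (hds : ∀ i, ds i ∈ Set.Icc (0 : ℝ) 1)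
    (hdx : ∀ j, dx j ∈ Set.Ico (0 : ℝ) 1) (hlam : 1 ≤ ‖lam‖) (hre : 0 ≤ lam.re)
    (hx : diagonal (fun j => lam - dx j) *ᵥ x + lam • (Fᴴ *ᵥ y) = 0)
    (hy : diagonal (fun i => lam - ds i) *ᵥ y = F *ᵥ x) : x = 0 := by
  by_contra hx0
  exact mul_sub_add_mul_star_mul_sub_ne_zero hlam hre
    (Finset.sum_nonneg fun j _ => mul_nonneg (hdx j).1 (sq_nonneg _))
    (sum_mul_norm_sq_lt (fun j => (hdx j).2) hx0)
    (Finset.sum_nonneg fun i _ => mul_nonneg (hds i).1 (sq_nonneg _))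
    (sum_mul_norm_sq_le (fun i => (hds i).2) y) (gamp_energy_identity hx hy)

end GampSystem

/-- **Key invertibility step (Appendix D).** If `‖F‖₂ < 1`, `D_s, D_x` are real
diagonal matrices with entries in `[0,1)`, and `|λ| ≥ 1`, then
`J_λ = λIₙ − D_x + λ·F*(λIₘ − D_s)⁻¹F` is invertible. -/
theorem gamp_Jlambda_invertible {m n : ℕ}
    (F : Matrix (Fin m) (Fin n) ℂ) (hF : specNormC F < 1)
    (ds : Fin m → ℝ) (hds : ∀ i, ds i ∈ Set.Ico (0 : ℝ) 1)
    (dx : Fin n → ℝ) (hdx : ∀ j, dx j ∈ Set.Ico (0 : ℝ) 1)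
    (lam : ℂ) (hlam : 1 ≤ ‖lam‖) :
    IsUnit
      (lam • (1 : Matrix (Fin n) (Fin n) ℂ) - Matrix.diagonal (fun j => (dx j : ℂ)) +
        lam • (Fᴴ *
          (lam • (1 : Matrix (Fin m) (Fin m) ℂ) -
            Matrix.diagonal (fun i => (ds i : ℂ)))⁻¹ * F)) := by
  rw [smul_one_eq_diagonal, smul_one_eq_diagonal, diagonal_sub, diagonal_sub,
    isUnit_iff_isUnit_det, isUnit_iff_ne_zero, Ne, ← exists_mulVec_eq_zero_iff]
  set M := diagonal fun i => lam - (ds i : ℂ)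
  have hM : IsUnit M.det := by
    rw [← isUnit_iff_isUnit_det, isUnit_diagonal, Pi.isUnit_iff]
    refine fun i => (sub_ne_zero.2 ?_).isUnit
    rintro rfl
    rw [Complex.norm_real, Real.norm_of_nonneg (hds i).1] at hlam
    exact (hds i).2.not_ge hlam
  rintro ⟨x, hx0, hJx⟩
  set y := M⁻¹ *ᵥ (F *ᵥ x)
  have hy : M *ᵥ y = F *ᵥ x := by rw [mulVec_mulVec, mul_nonsing_inv M hM, one_mulVec]
  have hx : diagonal (fun j => lam - dx j) *ᵥ x + lam • (Fᴴ *ᵥ y) = 0 := by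
    rw [← hJx, add_mulVec, smul_mulVec, Matrix.mul_assoc, ← mulVec_mulVec, ← mulVec_mulVec]
  rcases le_total lam.re 0 with hre | hre
  · exact hx0 <| gamp_eq_zero_of_re_nonpos hF (fun i => (hds i).1) (fun j => (hdx j).1) hlam
      hre hx hy
  · exact hx0 <| gamp_eq_zero_of_re_nonneg (fun i => Set.Ico_subset_Icc_self (hds i)) hdx hlam
      hre hx hy
end
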